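/- arXiv:1104.1889 — 4 statements merged into one kernel-verified Lean document; each statement's English description precedes it below -/
import Mathlib

section
/- Let R : [0,T] → ℝ (T ≥ 0) be a differentiable function with 0 < R(s) ≤ 1 for all s ∈ [0,T], R(0) < 1, and satisfying the differential inequality |R'(s)| ≤ R(s)·√(1 − R(s)) for all s ∈ [0,T]. Set c = (1 + √(1 − R(0)))/(1 − √(1 − R(0))). Then R(T) ≥ 4c/(c²·e^T + 2c + e^{−T}). -/
/-!
The solutions of `R' = -R √(1 - R)` with `0 < R < 1` are `R(s) = sech² (s / 2 + a)`, and the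
claimed bound is `sech² (T / 2 + a)` for `tanh a = √(1 - R 0)`, because then `e^{2a} = c`.
For `l > 1` the faster-decaying `sech² (l s / 2 + a)` is a strict subsolution starting at `R 0`,
so by comparison it stays below `R`; letting `l → 1` gives the bound.
-/

open Set Real

theorem le_of_strict_subsolution {ψ f f' g g' : ℝ → ℝ} {a b : ℝ}
    (hf : ∀ x ∈ Icc a b, HasDerivAt f (f' x) x) (hg : ∀ x ∈ Icc a b, HasDerivAt g (g' x) x)
    (hf' : ∀ x ∈ Ico a b, f' x < ψ (f x)) (hg' : ∀ x ∈ Ico a b, ψ (g x) ≤ g' x)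
    (ha : f a ≤ g a) : ∀ x ∈ Icc a b, f x ≤ g x :=
  image_le_of_deriv_right_lt_deriv_boundary'
    (fun x hx => (hf x hx).continuousAt.continuousWithinAt)
    (fun x hx => (hf x (Ico_subset_Icc_self hx)).hasDerivWithinAt) ha
    (fun x hx => (hg x hx).continuousAt.continuousWithinAt)
    (fun x hx => (hg x (Ico_subset_Icc_self hx)).hasDerivWithinAt)
    (fun x hx hfg => (hf' x hx).trans_le (hfg ▸ hg' x hx))

theorem tanh_nonneg_of_nonneg {y : ℝ} (hy : 0 ≤ y) : 0 ≤ tanh y := by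
  rw [tanh_eq_sinh_div_cosh]
  exact div_nonneg (sinh_nonneg_iff.mpr hy) (cosh_pos y).le

theorem tanh_pos_of_pos {y : ℝ} (hy : 0 < y) : 0 < tanh y := by
  rw [tanh_eq_sinh_div_cosh]
  exact div_pos (sinh_pos_iff.mpr hy) (cosh_pos y)

theorem one_sub_inv_cosh_sq (y : ℝ) : 1 - (cosh y ^ 2)⁻¹ = tanh y ^ 2 := by
  have := cosh_pos y
  rw [tanh_eq_sinh_div_cosh, div_pow, cosh_sq]
  field_simp
  ring

theorem sqrt_one_sub_inv_cosh_sq {y : ℝ} (hy : 0 ≤ y) : √(1 - (cosh y ^ 2)⁻¹) = tanh y := by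
  rw [one_sub_inv_cosh_sq, sqrt_sq (tanh_nonneg_of_nonneg hy)]

theorem hasDerivAt_inv_cosh_sq (y : ℝ) :
    HasDerivAt (fun y => (cosh y ^ 2)⁻¹) (-2 * ((cosh y ^ 2)⁻¹ * tanh y)) y := by
  have := cosh_pos y
  refine (((hasDerivAt_cosh y).pow 2).inv (pow_pos this 2).ne').congr_deriv ?_
  rw [tanh_eq_sinh_div_cosh, Pi.pow_apply]
  field_simp
  ring

theorem inv_cosh_sq_add_eq (a t : ℝ) :
    (cosh (t / 2 + a) ^ 2)⁻¹
      = 4 * exp (2 * a) / (exp (2 * a) ^ 2 * exp t + 2 * exp (2 * a) + exp (-t)) := by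
  have hx := exp_pos (t / 2)
  have hy := exp_pos a
  have ht : exp t = exp (t / 2) ^ 2 := by rw [← exp_nat_mul]; ring_nf
  rw [cosh_eq, neg_add, exp_add, exp_add, exp_neg, exp_neg, exp_neg, ht, two_mul, exp_add]
  field_simp
  ring

theorem inv_cosh_sq_artanh {u : ℝ} (hu : u ∈ Ioo (-1) 1) : (cosh (artanh u) ^ 2)⁻¹ = 1 - u ^ 2 := by
  have := one_sub_inv_cosh_sq (artanh u)
  rw [tanh_artanh hu] at this
  linarith

theorem exp_two_mul_artanh {u : ℝ} (hu : u ∈ Ioo (-1) 1) :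
    exp (2 * artanh u) = (1 + u) / (1 - u) := by
  rw [two_mul, exp_add, ← sq, exp_artanh hu, sq_sqrt (div_nonneg (by linarith [hu.1]) (by linarith [hu.2]))]

theorem inv_cosh_sq_mul_le_of_abs_deriv_le {R R' : ℝ → ℝ} {T a l : ℝ}
    (hderiv : ∀ s ∈ Icc 0 T, HasDerivAt R (R' s) s)
    (hineq : ∀ s ∈ Icc 0 T, |R' s| ≤ R s * √(1 - R s))
    (ha : 0 < a) (hl : 1 < l) (hR0 : R 0 = (cosh a ^ 2)⁻¹) :
    ∀ s ∈ Icc 0 T, (cosh (l * (s / 2) + a) ^ 2)⁻¹ ≤ R s := by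
  set f : ℝ → ℝ := fun s => (cosh (l * (s / 2) + a) ^ 2)⁻¹
  have hf : ∀ s, HasDerivAt f (-l * (f s * tanh (l * (s / 2) + a))) s := fun s =>
    ((hasDerivAt_inv_cosh_sq _).comp s
      (((hasDerivAt_id' s).div_const 2).const_mul l |>.add_const a)).congr_deriv (by ring)
  refine le_of_strict_subsolution (ψ := fun x => -(x * √(1 - x))) (fun s _ => hf s) hderiv
    (fun s hs => ?_) (fun s hs => neg_le_of_abs_le (hineq s (Ico_subset_Icc_self hs)))
    (by simp [hR0])
  have hy : 0 < l * (s / 2) + a := by nlinarith [hs.1]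
  have hf_tanh : 0 < f s * tanh (l * (s / 2) + a) :=
    mul_pos (inv_pos.mpr (pow_pos (cosh_pos _) 2)) (tanh_pos_of_pos hy)
  change -l * (f s * tanh _) < -(f s * √(1 - f s))
  rw [sqrt_one_sub_inv_cosh_sq hy.le]
  nlinarith

theorem inv_cosh_sq_le_of_abs_deriv_le {R R' : ℝ → ℝ} {T a : ℝ} (hT : 0 ≤ T)
    (hderiv : ∀ s ∈ Icc 0 T, HasDerivAt R (R' s) s)
    (hineq : ∀ s ∈ Icc 0 T, |R' s| ≤ R s * √(1 - R s))
    (ha : 0 < a) (hR0 : R 0 = (cosh a ^ 2)⁻¹) :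
    (cosh (T / 2 + a) ^ 2)⁻¹ ≤ R T := by
  have hcont : ContinuousAt (fun l => (cosh (l * (T / 2) + a) ^ 2)⁻¹) 1 :=
    ((by fun_prop : Continuous fun l => cosh (l * (T / 2) + a) ^ 2).continuousAt).inv₀
      (pow_pos (cosh_pos _) 2).ne'
  have hlim := hcont.tendsto.mono_left (nhdsWithin_le_nhds (s := Ioi 1))
  rw [one_mul] at hlim
  refine le_of_tendsto hlim ?_
  filter_upwards [self_mem_nhdsWithin] with l hl using
    inv_cosh_sq_mul_le_of_abs_deriv_le hderiv hineq ha hl hR0 T (right_mem_Icc.mpr hT)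

theorem steady_soliton_ode_explicit_bound_general
    (T : ℝ) (hT : 0 ≤ T) (R R' : ℝ → ℝ)
    (hderiv : ∀ s ∈ Set.Icc (0 : ℝ) T, HasDerivAt R (R' s) s)
    (hpos : ∀ s ∈ Set.Icc (0 : ℝ) T, 0 < R s)
    (h0 : R 0 < 1)
    (hineq : ∀ s ∈ Set.Icc (0 : ℝ) T, |R' s| ≤ R s * Real.sqrt (1 - R s))
    (c : ℝ) (hc : c = (1 + Real.sqrt (1 - R 0)) / (1 - Real.sqrt (1 - R 0))) :
    R T ≥ 4 * c / (c ^ 2 * Real.exp T + 2 * c + Real.exp (-T)) := by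
  set u := √(1 - R 0)
  have hR0pos := hpos 0 (left_mem_Icc.mpr hT)
  have hu : u ∈ Ioo 0 1 := ⟨sqrt_pos.mpr (by linarith), (sqrt_lt' one_pos).mpr (by linarith)⟩
  have hu' : u ∈ Ioo (-1) 1 := ⟨by linarith [hu.1], hu.2⟩
  have hR0 : R 0 = (cosh (artanh u) ^ 2)⁻¹ := by
    rw [inv_cosh_sq_artanh hu', sq_sqrt (by linarith)]
    ring
  rw [ge_iff_le, hc, ← exp_two_mul_artanh hu', ← inv_cosh_sq_add_eq]
  exact inv_cosh_sq_le_of_abs_deriv_le hT hderiv hineq (artanh_pos hu) hR0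

theorem steady_soliton_ode_explicit_bound
    (T : ℝ) (hT : 0 ≤ T) (R R' : ℝ → ℝ)
    (hderiv : ∀ s ∈ Set.Icc (0 : ℝ) T, HasDerivAt R (R' s) s)
    (hpos : ∀ s ∈ Set.Icc (0 : ℝ) T, 0 < R s)
    (hle : ∀ s ∈ Set.Icc (0 : ℝ) T, R s ≤ 1)
    (h0 : R 0 < 1)
    (hineq : ∀ s ∈ Set.Icc (0 : ℝ) T, |R' s| ≤ R s * Real.sqrt (1 - R s))
    (c : ℝ) (hc : c = (1 + Real.sqrt (1 - R 0)) / (1 - Real.sqrt (1 - R 0))) :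
    R T ≥ 4 * c / (c ^ 2 * Real.exp T + 2 * c + Real.exp (-T)) :=
  steady_soliton_ode_explicit_bound_general T hT R R' hderiv hpos h0 hineq c hc
end

section
/- Let R : [0,T] → ℝ (T ≥ 0) be a differentiable function with 0 < R(s) ≤ 1 for all s ∈ [0,T], R(0) < 1, and satisfying |R'(s)| ≤ R(s)·√(1 − R(s)) for all s ∈ [0,T]. Set c = (1 + √(1 − R(0)))/(1 − √(1 − R(0))). Then R(T) ≥ (1/c)·sech²(T/2), where sech(x) = 1/cosh(x) is the hyperbolic secant. -/
/-!
Put `u = √(1 - R)`. Where `R < 1`, the hypothesis `|R'| ≤ R √(1 - R)` gives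
`u' = -R' / (2u) ≤ R / 2 = (1 - u²) / 2`, so `artanh u` grows at rate at most `1/2`: the quantity
`(1 + u) / (1 - u) = exp (2 artanh u)` grows at most like `exp s`. Run this from the last time `τ`
at which `R ≥ 1` (where the quantity is `1`), or from `0` (where it is `c`), to get
`(1 + u T) / (1 - u T) ≤ c exp T`; solving for `R T = 1 - (u T)²` gives the `sech²` bound.
-/

open Real Set

lemma le_exp_sub_mul_of_hasDerivAt_le_self {g g' : ℝ → ℝ} {a b : ℝ} (hab : a ≤ b)
    (hg : ContinuousOn g (Icc a b)) (hg' : ∀ x ∈ Ioo a b, HasDerivAt g (g' x) x)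
    (hle : ∀ x ∈ Ioo a b, g' x ≤ g x) :
    g b ≤ exp (b - a) * g a := by
  have hanti : AntitoneOn (fun s => exp (-s) * g s) (Icc a b) := by
    refine antitoneOn_of_hasDerivWithinAt_nonpos (convex_Icc a b)
      ((continuous_exp.comp continuous_neg).continuousOn.mul hg)
      (f' := fun x => exp (-x) * (g' x - g x))
      (fun x hx => ?_) (fun x hx => ?_) <;> rw [interior_Icc] at hx
    · exact (((hasDerivAt_neg x).exp.fun_mul (hg' x hx)).congr_deriv (by ring)).hasDerivWithinAt
    · exact mul_nonpos_of_nonneg_of_nonpos (exp_pos _).le (sub_nonpos.2 (hle x hx))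
  calc g b = exp b * (exp (-b) * g b) := by
        rw [← mul_assoc, ← exp_add, add_neg_cancel, exp_zero, one_mul]
    _ ≤ exp b * (exp (-a) * g a) := mul_le_mul_of_nonneg_left
        (hanti (left_mem_Icc.2 hab) (right_mem_Icc.2 hab) hab) (exp_pos b).le
    _ = exp (b - a) * g a := by rw [← mul_assoc, ← exp_add, sub_eq_add_neg]

lemma one_add_div_one_sub_le_exp_mul {u u' : ℝ → ℝ} {a b : ℝ} (hab : a ≤ b)
    (hu : ContinuousOn u (Icc a b)) (hu1 : ∀ x ∈ Icc a b, u x < 1)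
    (hu' : ∀ x ∈ Ioo a b, HasDerivAt u (u' x) x)
    (hle : ∀ x ∈ Ioo a b, u' x ≤ (1 - u x ^ 2) / 2) :
    (1 + u b) / (1 - u b) ≤ exp (b - a) * ((1 + u a) / (1 - u a)) := by
  refine le_exp_sub_mul_of_hasDerivAt_le_self (g := fun s => (1 + u s) / (1 - u s))
    (g' := fun x => 2 * u' x / (1 - u x) ^ 2) hab
    ((continuousOn_const.add hu).div (continuousOn_const.sub hu)
      fun x hx => (sub_pos.2 (hu1 x hx)).ne') (fun x hx => ?_) (fun x hx => ?_)
  · have hx1 := sub_pos.2 (hu1 x (Ioo_subset_Icc_self hx))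
    exact (((hu' x hx).const_add 1).fun_div ((hu' x hx).const_sub 1) hx1.ne').congr_deriv (by ring)
  · have hx1 := sub_pos.2 (hu1 x (Ioo_subset_Icc_self hx))
    rw [div_le_div_iff₀ (by positivity) hx1]
    nlinarith [hle x hx]

lemma hasDerivAt_sqrt_one_sub_and_le {R : ℝ → ℝ} {r x : ℝ} (hR : HasDerivAt R r x)
    (hlt : R x < 1) (hr : |r| ≤ R x * √(1 - R x)) :
    HasDerivAt (fun s => √(1 - R s)) (-r / (2 * √(1 - R x))) x ∧
      -r / (2 * √(1 - R x)) ≤ (1 - √(1 - R x) ^ 2) / 2 := by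
  have hu : 0 < √(1 - R x) := sqrt_pos.2 (sub_pos.2 hlt)
  refine ⟨(hR.const_sub 1).sqrt (sub_pos.2 hlt).ne', ?_⟩
  rw [sq_sqrt (sub_pos.2 hlt).le, div_le_div_iff₀ (by positivity) two_pos]
  nlinarith [neg_abs_le r]

lemma exists_mem_Icc_forall_Ioc_lt {f : ℝ → ℝ} {a b : ℝ} (hab : a ≤ b)
    (hf : ContinuousOn f (Icc a b)) (y : ℝ) :
    ∃ τ ∈ Icc a b, (τ = a ∨ y ≤ f τ) ∧ ∀ s ∈ Ioc τ b, f s < y := by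
  have hS : IsCompact (insert a (Icc a b ∩ f ⁻¹' Ici y)) :=
    (isCompact_Icc.of_isClosed_subset
      (hf.preimage_isClosed_of_isClosed isClosed_Icc isClosed_Ici) inter_subset_left).insert a
  obtain ⟨τ, hτS, hτmax⟩ := hS.exists_isGreatest (insert_nonempty _ _)
  have hτ : τ ∈ Icc a b := by
    rcases hτS with rfl | ⟨h, -⟩
    exacts [left_mem_Icc.2 hab, h]
  refine ⟨τ, hτ, hτS.imp id (fun h => h.2), fun s hs => not_le.1 fun hys => ?_⟩
  exact not_lt.2 (hτmax (Or.inr ⟨⟨hτ.1.trans hs.1.le, hs.2⟩, hys⟩)) hs.1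

lemma inv_cosh_half_sq (x : ℝ) : (1 / cosh (x / 2)) ^ 2 = 4 * exp x / (exp x + 1) ^ 2 := by
  have hx : exp x = exp (x / 2) ^ 2 := by rw [← exp_nat_mul]; ring_nf
  rw [cosh_eq, exp_neg, hx]
  field_simp
  ring

lemma div_mul_inv_cosh_half_sq_le {c u T : ℝ} (hc : 1 ≤ c) (hu : 0 ≤ u) (hu1 : u < 1)
    (h : (1 + u) / (1 - u) ≤ exp T * c) :
    1 / c * (1 / cosh (T / 2)) ^ 2 ≤ 1 - u ^ 2 := by
  set k := exp T * c
  have hE := exp_pos T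
  have hk : 0 < k := by positivity
  have huk : u * (k + 1) ≤ k - 1 := by
    rw [div_le_iff₀ (sub_pos.2 hu1)] at h
    linarith
  calc 1 / c * (1 / cosh (T / 2)) ^ 2 = 4 * exp T / (c * (exp T + 1) ^ 2) := by
        rw [inv_cosh_half_sq]; field_simp
    _ ≤ 4 * k / (k + 1) ^ 2 := by
        rw [div_le_div_iff₀ (by positivity) (by positivity)]
        have : k + 1 ≤ c * (exp T + 1) := by linarith
        have := pow_le_pow_left₀ (by positivity) this 2
        nlinarith [mul_le_mul_of_nonneg_left this (by positivity : 0 ≤ 4 * exp T)]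
    _ ≤ 1 - u ^ 2 := by
        rw [div_le_iff₀ (by positivity)]
        nlinarith [mul_nonneg hu hk.le]

theorem steady_soliton_ode_sech_bound_general
    (T : ℝ) (hT : 0 ≤ T) (R R' : ℝ → ℝ)
    (hderiv : ∀ s ∈ Set.Icc (0 : ℝ) T, HasDerivAt R (R' s) s)
    (hpos : ∀ s ∈ Set.Icc (0 : ℝ) T, 0 < R s)
    (hineq : ∀ s ∈ Set.Icc (0 : ℝ) T, |R' s| ≤ R s * Real.sqrt (1 - R s))
    (c : ℝ) (hc : c = (1 + Real.sqrt (1 - R 0)) / (1 - Real.sqrt (1 - R 0))) :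
    R T ≥ (1 / c) * (1 / Real.cosh (T / 2)) ^ 2 := by
  have hR : ContinuousOn R (Icc 0 T) := fun s hs => (hderiv s hs).continuousAt.continuousWithinAt
  have hu1 : ∀ s ∈ Icc 0 T, √(1 - R s) < 1 := fun s hs =>
    (sqrt_lt' one_pos).2 (by linarith [hpos s hs])
  have hc1 : 1 ≤ c := by
    rw [hc, le_div_iff₀ (sub_pos.2 (hu1 0 (left_mem_Icc.2 hT)))]
    linarith [sqrt_nonneg (1 - R 0)]
  have hc_exp : ∀ t, 0 ≤ t → 1 ≤ exp t * c := fun t ht =>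
    one_le_mul_of_one_le_of_one_le (one_le_exp ht) hc1
  rcases le_or_gt 1 (R T) with hRT | hRT
  · exact (div_mul_inv_cosh_half_sq_le hc1 le_rfl one_pos (by simpa using hc_exp T hT)).trans
      (by simpa using hRT)
  obtain ⟨τ, hτ, hτ_last, hlt⟩ := exists_mem_Icc_forall_Ioc_lt hT hR 1
  have hsub : Icc τ T ⊆ Icc 0 T := Icc_subset_Icc_left hτ.1
  have hgτ : (1 + √(1 - R τ)) / (1 - √(1 - R τ)) ≤ exp τ * c := by
    rcases hτ_last with rfl | hRτ
    · rw [exp_zero, one_mul, hc]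
    · simpa [sqrt_eq_zero'.2 (sub_nonpos.2 hRτ)] using hc_exp τ hτ.1
  have hu' : ∀ s ∈ Ioo τ T, _ := fun s hs =>
    have hs' := hsub (Ioo_subset_Icc_self hs)
    hasDerivAt_sqrt_one_sub_and_le (hderiv s hs') (hlt s (Ioo_subset_Ioc_self hs)) (hineq s hs')
  have hgT := one_add_div_one_sub_le_exp_mul hτ.2
    (continuousOn_const.sub (hR.mono hsub)).sqrt (fun s hs => hu1 s (hsub hs))
    (fun s hs => (hu' s hs).1) (fun s hs => (hu' s hs).2)
  have hgT' : (1 + √(1 - R T)) / (1 - √(1 - R T)) ≤ exp T * c := calc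
    _ ≤ exp (T - τ) * (exp τ * c) := hgT.trans (mul_le_mul_of_nonneg_left hgτ (exp_pos _).le)
    _ = exp T * c := by rw [← mul_assoc, ← exp_add, sub_add_cancel]
  have := div_mul_inv_cosh_half_sq_le hc1 (sqrt_nonneg _) (hu1 T (right_mem_Icc.2 hT)) hgT'
  rwa [sq_sqrt (by linarith), sub_sub_cancel] at this

theorem steady_soliton_ode_sech_bound
    (T : ℝ) (hT : 0 ≤ T) (R R' : ℝ → ℝ)
    (hderiv : ∀ s ∈ Set.Icc (0 : ℝ) T, HasDerivAt R (R' s) s)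
    (hpos : ∀ s ∈ Set.Icc (0 : ℝ) T, 0 < R s)
    (hle : ∀ s ∈ Set.Icc (0 : ℝ) T, R s ≤ 1)
    (h0 : R 0 < 1)
    (hineq : ∀ s ∈ Set.Icc (0 : ℝ) T, |R' s| ≤ R s * Real.sqrt (1 - R s))
    (c : ℝ) (hc : c = (1 + Real.sqrt (1 - R 0)) / (1 - Real.sqrt (1 - R 0))) :
    R T ≥ (1 / c) * (1 / Real.cosh (T / 2)) ^ 2 :=
  steady_soliton_ode_sech_bound_general T hT R R' hderiv hpos hineq c hc
end

section
/- Let R : [0,T] → ℝ (T ≥ 0) be a differentiable function with 0 < R(s) ≤ 1 for all s ∈ [0,T], R(0) < 1, and satisfying the weaker differential inequality |R'(s)| ≤ 2·R(s)·√(1 − R(s)) for all s ∈ [0,T]. Set c = (1 + √(1 − R(0)))/(1 − √(1 − R(0))). Then R(T) ≥ (1/c)·sech²(T), where sech(x) = 1/cosh(x). -/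
/-!
The function `y = sech² s` solves `y' = -2 y √(1 - y)`, so the bound `-R' ≤ 2 R √(1 - R)`
keeps `R` above `sech²(s + a)` once `sech² a ≤ R 0`; running the barrier slightly faster,
as `sech²((1 + ε) s + a)`, makes the comparison strict, and `ε → 0` follows. With
`tanh a = √(1 - R 0)` one has `sech² a = R 0` and `e^{2a} = c`, and
`cosh (T + a) ≤ e^a cosh T` turns `sech²(T + a)` into `sech² T / c`.
-/

open Real Set Filter Topology

lemma hasDerivAt_one_div_cosh_sq (y : ℝ) :
    HasDerivAt (fun y => (1 / cosh y) ^ 2) (-(2 * sinh y / cosh y ^ 3)) y := by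
  refine (((hasDerivAt_const y (1 : ℝ)).div (hasDerivAt_cosh y)
    (cosh_pos y).ne').pow 2).congr_deriv ?_
  have := (cosh_pos y).ne'
  norm_num [Pi.div_apply]
  field

lemma sqrt_one_sub_one_div_cosh_sq {y : ℝ} (hy : 0 ≤ y) :
    √(1 - (1 / cosh y) ^ 2) = sinh y / cosh y := by
  have hc := (cosh_pos y).ne'
  rw [← sqrt_sq (div_nonneg (sinh_nonneg_iff.2 hy) (cosh_pos y).le)]
  congr 1
  field_simp
  linarith [cosh_sq y]

lemma cosh_add_le_exp_mul_cosh (x : ℝ) {a : ℝ} (ha : 0 ≤ a) :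
    cosh (x + a) ≤ exp a * cosh x := by
  rw [cosh_add, ← cosh_add_sinh a]
  nlinarith [sinh_lt_cosh x, sinh_nonneg_iff.2 ha]

lemma one_div_cosh_artanh_sq {t : ℝ} (ht : t ∈ Ioo (-1) 1) :
    (1 / cosh (artanh t)) ^ 2 = 1 - t ^ 2 := by
  rw [cosh_artanh ht, one_div_one_div, sq_sqrt]
  nlinarith [ht.1, ht.2]

lemma exp_artanh_sq {t : ℝ} (ht : t ∈ Ioo (-1) 1) :
    exp (artanh t) ^ 2 = (1 + t) / (1 - t) := by
  rw [exp_artanh ht, sq_sqrt]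
  exact div_nonneg (by linarith [ht.1]) (by linarith [ht.2])

section Comparison

variable {T a : ℝ} {R R' : ℝ → ℝ}

lemma one_div_cosh_sq_le_of_neg_deriv_le {ε : ℝ} (ha : 0 < a) (hε : 0 < ε)
    (hderiv : ∀ s ∈ Icc 0 T, HasDerivAt R (R' s) s)
    (hineq : ∀ s ∈ Ico 0 T, -R' s ≤ 2 * R s * √(1 - R s))
    (h0 : (1 / cosh a) ^ 2 ≤ R 0) :
    ∀ s ∈ Icc 0 T, (1 / cosh ((1 + ε) * s + a)) ^ 2 ≤ R s := by
  intro s hs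
  have hbarrier (x : ℝ) : HasDerivAt (fun s => -(1 / cosh ((1 + ε) * s + a)) ^ 2)
      (2 * sinh ((1 + ε) * x + a) / cosh ((1 + ε) * x + a) ^ 3 * (1 + ε)) x := by
    have hlin : HasDerivAt (fun s => (1 + ε) * s + a) (1 + ε) x := by
      simpa using ((hasDerivAt_id x).const_mul (1 + ε)).add_const a
    refine ((hasDerivAt_one_div_cosh_sq _).comp x hlin).neg.congr_deriv ?_
    ring
  refine neg_le_neg_iff.1 (image_le_of_deriv_right_lt_deriv_boundary (f := fun s => -R s)
    (fun x hx => (hderiv x hx).neg.continuousAt.continuousWithinAt)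
    (fun x hx => (hderiv x (Ico_subset_Icc_self hx)).neg.hasDerivWithinAt)
    (by simpa using h0) hbarrier ?_ hs)
  intro x hx htouch
  set y := (1 + ε) * x + a
  have hy : 0 < y := by nlinarith [hx.1]
  have hRx : R x = (1 / cosh y) ^ 2 := by simpa using htouch
  have hrate : 2 * (1 / cosh y) ^ 2 * (sinh y / cosh y) = 2 * sinh y / cosh y ^ 3 := by
    have := (cosh_pos y).ne'
    field_simp
  have hbound := hineq x hx
  rw [hRx, sqrt_one_sub_one_div_cosh_sq hy.le, hrate] at hbound
  have hrate_pos : 0 < 2 * sinh y / cosh y ^ 3 := by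
    have := sinh_pos_iff.2 hy
    have := cosh_pos y
    positivity
  linarith [mul_pos hrate_pos hε]

lemma one_div_cosh_add_sq_le_of_neg_deriv_le (ha : 0 < a) (hT : 0 ≤ T)
    (hderiv : ∀ s ∈ Icc 0 T, HasDerivAt R (R' s) s)
    (hineq : ∀ s ∈ Ico 0 T, -R' s ≤ 2 * R s * √(1 - R s))
    (h0 : (1 / cosh a) ^ 2 ≤ R 0) :
    (1 / cosh (T + a)) ^ 2 ≤ R T := by
  have hcont : Continuous fun ε => (1 / cosh ((1 + ε) * T + a)) ^ 2 := by
    fun_prop (disch := exact fun _ => (cosh_pos _).ne')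
  have hlim : Tendsto (fun ε => (1 / cosh ((1 + ε) * T + a)) ^ 2) (𝓝[>] 0)
      (𝓝 ((1 / cosh (T + a)) ^ 2)) := by
    simpa using (hcont.tendsto 0).mono_left nhdsWithin_le_nhds
  refine le_of_tendsto hlim (eventually_nhdsWithin_of_forall fun ε hε => ?_)
  exact one_div_cosh_sq_le_of_neg_deriv_le ha hε hderiv hineq h0 T ⟨hT, le_rfl⟩

end Comparison

theorem steady_soliton_nonneg_ricci_ode_sech_bound_general
    (T : ℝ) (hT : 0 ≤ T) (R R' : ℝ → ℝ)
    (hderiv : ∀ s ∈ Set.Icc (0 : ℝ) T, HasDerivAt R (R' s) s)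
    (hpos : ∀ s ∈ Set.Icc (0 : ℝ) T, 0 < R s)
    (h0 : R 0 < 1)
    (hineq : ∀ s ∈ Set.Icc (0 : ℝ) T, |R' s| ≤ 2 * R s * Real.sqrt (1 - R s))
    (c : ℝ) (hc : c = (1 + Real.sqrt (1 - R 0)) / (1 - Real.sqrt (1 - R 0))) :
    R T ≥ (1 / c) * (1 / Real.cosh T) ^ 2 := by
  set t := √(1 - R 0)
  have hR0 : 0 < R 0 := hpos 0 ⟨le_rfl, hT⟩
  have ht_sq : t ^ 2 = 1 - R 0 := sq_sqrt (by linarith)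
  have ht_pos : 0 < t := sqrt_pos.2 (by linarith)
  have ht : t ∈ Ioo (-1) 1 := ⟨by linarith, (sqrt_lt' one_pos).2 (by linarith)⟩
  set a := artanh t
  have ha : 0 < a := artanh_pos ⟨ht_pos, ht.2⟩
  have hRT : (1 / cosh (T + a)) ^ 2 ≤ R T := by
    refine one_div_cosh_add_sq_le_of_neg_deriv_le ha hT hderiv
      (fun s hs => (neg_le_abs _).trans (hineq s (Ico_subset_Icc_self hs))) ?_
    rw [one_div_cosh_artanh_sq ht, ht_sq, sub_sub_cancel]
  calc (1 / c) * (1 / cosh T) ^ 2 = (1 / (exp a * cosh T)) ^ 2 := by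
        rw [hc, ← exp_artanh_sq ht]; ring
    _ ≤ (1 / cosh (T + a)) ^ 2 := by gcongr; exact cosh_add_le_exp_mul_cosh T ha.le
    _ ≤ R T := hRT

theorem steady_soliton_nonneg_ricci_ode_sech_bound
    (T : ℝ) (hT : 0 ≤ T) (R R' : ℝ → ℝ)
    (hderiv : ∀ s ∈ Set.Icc (0 : ℝ) T, HasDerivAt R (R' s) s)
    (hpos : ∀ s ∈ Set.Icc (0 : ℝ) T, 0 < R s)
    (hle : ∀ s ∈ Set.Icc (0 : ℝ) T, R s ≤ 1)
    (h0 : R 0 < 1)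
    (hineq : ∀ s ∈ Set.Icc (0 : ℝ) T, |R' s| ≤ 2 * R s * Real.sqrt (1 - R s))
    (c : ℝ) (hc : c = (1 + Real.sqrt (1 - R 0)) / (1 - Real.sqrt (1 - R 0))) :
    R T ≥ (1 / c) * (1 / Real.cosh T) ^ 2 :=
  steady_soliton_nonneg_ricci_ode_sech_bound_general T hT R R' hderiv hpos h0 hineq c hc
end

section
/- Let R : [0,t] → ℝ (t ≥ 0) be differentiable with 0 < R(s) < 1 for all s ∈ [0,t], and suppose |R'(s)| ≤ R(s)·√(1 − R(s)) for all s ∈ [0,t]. Then ln((1 + √(1 − R(t)))/(1 − √(1 − R(t)))) − ln((1 + √(1 − R(0)))/(1 − √(1 − R(0)))) ≤ t; equivalently, 1 + √(1 − R(t)) ≤ c·e^t·(1 − √(1 − R(t))) where c = (1 + √(1 − R(0)))/(1 − √(1 − R(0))). -/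
/-! With `u = √(1 - R)`, the quantity `log ((1 + u) / (1 - u)) = 2 artanh u` has derivative
`-R' / (R √(1 - R))` along `R`, which the hypothesis bounds by `1` in absolute value; the mean
value inequality on `[0, t]` then bounds its increment by `t`, and exponentiating gives the
second form. -/

open Real Set

noncomputable def logSqrtRatio (x : ℝ) : ℝ :=
  log ((1 + √(1 - x)) / (1 - √(1 - x)))

lemma one_sub_sqrt_one_sub_pos {x : ℝ} (hx : 0 < x) : 0 < 1 - √(1 - x) := by
  have : √(1 - x) < 1 := (sqrt_lt' one_pos).2 (by linarith)
  linarith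

lemma hasDerivAt_logSqrtRatio {x : ℝ} (hx₀ : 0 < x) (hx₁ : x < 1) :
    HasDerivAt logSqrtRatio (-1 / (x * √(1 - x))) x := by
  have hu : HasDerivAt (fun y => √(1 - y)) (-1 / (2 * √(1 - x))) x := by
    simpa using ((hasDerivAt_id x).const_sub 1).sqrt (by simp; linarith)
  have hv₀ : 0 < √(1 - x) := sqrt_pos.2 (by linarith)
  have hv₁ := one_sub_sqrt_one_sub_pos hx₀
  have hsq : √(1 - x) ^ 2 = 1 - x := sq_sqrt (by linarith)
  have hquot := ((hu.const_add 1).fun_div (hu.const_sub 1) hv₁.ne').log (by positivity)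
  refine hquot.congr_deriv ?_
  generalize √(1 - x) = v at hv₀ hv₁ hsq ⊢
  obtain rfl : x = 1 - v ^ 2 := by linarith
  field_simp
  ring

lemma logSqrtRatio_sub_le_of_hasDerivAt {t : ℝ} (ht : 0 ≤ t) {R R' : ℝ → ℝ}
    (hderiv : ∀ s ∈ Icc 0 t, HasDerivAt R (R' s) s) (hpos : ∀ s ∈ Icc 0 t, 0 < R s)
    (hlt : ∀ s ∈ Icc 0 t, R s < 1)
    (hineq : ∀ s ∈ Icc 0 t, |R' s| ≤ R s * √(1 - R s)) :
    logSqrtRatio (R t) - logSqrtRatio (R 0) ≤ t := by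
  have hcomp : ∀ s ∈ Icc 0 t,
      HasDerivAt (logSqrtRatio ∘ R) (-1 / (R s * √(1 - R s)) * R' s) s := fun s hs =>
    (hasDerivAt_logSqrtRatio (hpos s hs) (hlt s hs)).comp s (hderiv s hs)
  have hbound : ∀ s ∈ Icc 0 t, ‖-1 / (R s * √(1 - R s)) * R' s‖ ≤ 1 := fun s hs => by
    have hden : 0 < R s * √(1 - R s) := mul_pos (hpos s hs) (sqrt_pos.2 (by linarith [hlt s hs]))
    rw [norm_mul, norm_div, norm_neg, norm_one, Real.norm_of_nonneg hden.le, Real.norm_eq_abs,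
      one_div_mul_eq_div, div_le_one hden]
    exact hineq s hs
  have hmvt := (convex_Icc 0 t).norm_image_sub_le_of_norm_hasDerivWithin_le
    (fun s hs => (hcomp s hs).hasDerivWithinAt) hbound (left_mem_Icc.2 ht) (right_mem_Icc.2 ht)
  rw [one_mul, sub_zero, Real.norm_of_nonneg ht] at hmvt
  exact (le_abs_self _).trans hmvt

lemma le_mul_exp_of_log_sub_log_le {a b t : ℝ} (ha : 0 < a) (hb : 0 < b)
    (h : log a - log b ≤ t) : a ≤ b * exp t := by
  rw [← log_le_log_iff ha (by positivity), log_mul hb.ne' (exp_ne_zero t), log_exp]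
  linarith

theorem integration_step
    (t : ℝ) (ht : 0 ≤ t) (R R' : ℝ → ℝ)
    (hderiv : ∀ s ∈ Set.Icc (0 : ℝ) t, HasDerivAt R (R' s) s)
    (hpos : ∀ s ∈ Set.Icc (0 : ℝ) t, 0 < R s)
    (hlt : ∀ s ∈ Set.Icc (0 : ℝ) t, R s < 1)
    (hineq : ∀ s ∈ Set.Icc (0 : ℝ) t, |R' s| ≤ R s * Real.sqrt (1 - R s))
    (c : ℝ) (hc : c = (1 + Real.sqrt (1 - R 0)) / (1 - Real.sqrt (1 - R 0))) :
    Real.log ((1 + Real.sqrt (1 - R t)) / (1 - Real.sqrt (1 - R t)))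
      - Real.log ((1 + Real.sqrt (1 - R 0)) / (1 - Real.sqrt (1 - R 0))) ≤ t ∧
    1 + Real.sqrt (1 - R t) ≤ c * Real.exp t * (1 - Real.sqrt (1 - R t)) := by
  have hlog := logSqrtRatio_sub_le_of_hasDerivAt ht hderiv hpos hlt hineq
  refine ⟨hlog, ?_⟩
  have hden₀ := one_sub_sqrt_one_sub_pos (hpos 0 (left_mem_Icc.2 ht))
  have hden := one_sub_sqrt_one_sub_pos (hpos t (right_mem_Icc.2 ht))
  rw [← div_le_iff₀ hden, hc]
  exact le_mul_exp_of_log_sub_log_le (by positivity) (by positivity) hlog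
end
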